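/- There is a bijection between 2-Motzkin paths of length n−1 and Dyck paths of length 2n, given by replacing each up step with two up steps, each down step with two down steps, each straight level step with up-down, each wavy level step with down-up, and finally prepending an up step and appending a down step. -/
import Mathlib


/-- Steps of a 2-Motzkin path: up, down, and two kinds of level steps. -/
inductive MStep : Type
  | up | down | straight | wavy
deriving DecidableEq

/-- The vertical displacement of a 2-Motzkin step. -/
def mval : MStep → ℤ
  | .up => 1
  | .down => -1
  | .straight => 0
  | .wavy => 0

/-- The level (y-coordinate) of the path `p` after `k` steps. -/
def mlvl (p : List MStep) (k : ℕ) : ℤ := ((p.take k).map mval).sum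

/-- `p` is a 2-Motzkin path: it ends on the x-axis and never goes below it. -/
def IsMotzkin2 (p : List MStep) : Prop :=
  mlvl p p.length = 0 ∧ ∀ k ≤ p.length, 0 ≤ mlvl p k

/-- The value `±1` of an up/down step (`true` is up). -/
def stepVal (b : Bool) : ℤ := if b then 1 else -1

/-- The level (y-coordinate) of the path `p` after `k` steps. -/
def lvl (p : List Bool) (k : ℕ) : ℤ := ((p.take k).map stepVal).sum

/-- `p` is a Dyck path: it ends on the x-axis and never goes below it. -/
def IsDyck (p : List Bool) : Prop :=
  lvl p p.length = 0 ∧ ∀ k ≤ p.length, 0 ≤ lvl p k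

/-- The replacement of each 2-Motzkin step by a pair of up/down steps. -/
def conv : MStep → List Bool
  | .up => [true, true]
  | .down => [false, false]
  | .straight => [true, false]
  | .wavy => [false, true]

/-- The canonical map from 2-Motzkin paths of length `n-1` to Dyck paths of
length `2n`: replace each step via `conv`, prepend an up step and append a
down step. -/
def motzkinToDyck (p : List MStep) : List Bool :=
  true :: ((p.map conv).flatten ++ [false])

/- ===== auxiliary ===== -/

def dec : Bool → Bool → MStep
  | true, true => .up
  | false, false => .down
  | true, false => .straight
  | false, true => .wavy

def unconv : List Bool → List MStep
  | a :: b :: rest => dec a b :: unconv rest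
  | _ => []

lemma unconv_conv (p : List MStep) : unconv ((p.map conv).flatten) = p := by
  induction p with
  | nil => rfl
  | cons m p ih => cases m <;> simp [conv, unconv, dec, ih]

lemma conv_unconv : ∀ F : List Bool, F.length % 2 = 0 → ((unconv F).map conv).flatten = F
  | [], _ => rfl
  | [a], h => by simp at h
  | a :: b :: F, h => by
      have ih := conv_unconv F (by simp at h; omega)
      cases a <;> cases b <;> simp [unconv, dec, conv, ih]

lemma conv_length (m : MStep) : (conv m).length = 2 := by cases m <;> rfl

lemma flatten_conv_length (p : List MStep) : ((p.map conv).flatten).length = 2 * p.length := by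
  induction p with
  | nil => rfl
  | cons m p ih =>
    rw [List.map_cons, List.flatten_cons, List.length_append, conv_length, ih,
      List.length_cons]
    ring

lemma sum_conv (m : MStep) : ((conv m).map stepVal).sum = 2 * mval m := by
  cases m <;> simp [conv, mval, stepVal]

lemma flatten_conv_sum (p : List MStep) :
    (((p.map conv).flatten).map stepVal).sum = 2 * (p.map mval).sum := by
  induction p with
  | nil => rfl
  | cons m p ih =>
    rw [List.map_cons, List.flatten_cons, List.map_append, List.sum_append, sum_conv,
      List.map_cons, List.sum_cons, ih]
    ring

lemma take_flatten (p : List MStep) (j : ℕ) :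
    ((p.map conv).flatten).take (2*j) = (((p.take j).map conv)).flatten := by
  induction p generalizing j with
  | nil => simp
  | cons m p ih =>
    cases j with
    | zero => simp
    | succ j =>
      have h2 : 2 * (j+1) = 2*j + 1 + 1 := by ring
      rw [h2]
      cases m <;> simp [conv, ih]

lemma mToD_length (p : List MStep) : (motzkinToDyck p).length = 2 * p.length + 2 := by
  rw [motzkinToDyck, List.length_cons, List.length_append, flatten_conv_length,
    List.length_singleton]

lemma lvl_mToD (p : List MStep) (j : ℕ) (hj : j ≤ p.length) :
    lvl (motzkinToDyck p) (2*j+1) = 1 + 2 * mlvl p j := by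
  unfold lvl motzkinToDyck mlvl
  rw [List.take_succ_cons,
    List.take_append_of_le_length (by rw [flatten_conv_length]; omega),
    take_flatten, List.map_cons, List.sum_cons, flatten_conv_sum]
  simp [stepVal]

lemma lvl_mToD_full (p : List MStep) :
    lvl (motzkinToDyck p) (motzkinToDyck p).length = 2 * mlvl p p.length := by
  unfold lvl mlvl
  rw [List.take_length, List.take_length, motzkinToDyck, List.map_cons, List.sum_cons,
    List.map_append, List.sum_append, flatten_conv_sum]
  simp [stepVal]

lemma lvl_succ (q : List Bool) (k : ℕ) :
    lvl q k - 1 ≤ lvl q (k+1) ∧ lvl q (k+1) ≤ lvl q k + 1 := by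
  unfold lvl
  rw [List.take_succ]
  rcases h : q[k]? with _ | b
  · simp
  · cases b <;> simp [stepVal] <;> omega

theorem motzkinToDyck_bijection (n : ℕ) (hn : 0 < n) :
    Set.BijOn motzkinToDyck
      {p : List MStep | IsMotzkin2 p ∧ p.length = n - 1}
      {q : List Bool | IsDyck q ∧ q.length = 2 * n} := by
  refine ⟨?_, ?_, ?_⟩
  · -- MapsTo
    rintro p ⟨⟨hend, hnn⟩, hlen⟩
    have hql := mToD_length p
    refine ⟨⟨?_, ?_⟩, by omega⟩
    · rw [lvl_mToD_full, hend]; ring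
    · intro k hk
      rcases Nat.even_or_odd k with ⟨j, hj⟩ | ⟨j, hj⟩
      · rcases Nat.eq_zero_or_pos j with h0 | hpos
        · subst h0; have : k = 0 := by omega
          subst this; simp [lvl]
        · have hk' : k = 2*(j-1)+1+1 := by omega
          have h1 := lvl_mToD p (j-1) (by omega)
          have h2 := (lvl_succ (motzkinToDyck p) (2*(j-1)+1)).1
          have h3 := hnn (j-1) (by omega)
          rw [hk']; omega
      · have h1 := lvl_mToD p j (by omega)
        have h3 := hnn j (by omega)
        have hk' : k = 2*j+1 := by omega
        rw [hk']; omega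
  · -- InjOn
    intro p _ p' _ h
    have h2 : (p.map conv).flatten = (p'.map conv).flatten := by
      simpa [motzkinToDyck] using h
    have := congrArg unconv h2
    rwa [unconv_conv, unconv_conv] at this
  · -- SurjOn
    rintro q ⟨⟨hend, hnn⟩, hlen⟩
    cases q with
    | nil => simp at hlen; omega
    | cons a r =>
      have ha : a = true := by
        cases a
        · have h1 := hnn 1 (by simp)
          simp [lvl, stepVal] at h1
        · rfl
      subst ha
      have hrne : r ≠ [] := by
        intro h; subst h; simp at hlen; omega
      obtain ⟨F, b, hr⟩ : ∃ F b, r = F ++ [b] :=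
        ⟨r.dropLast, r.getLast hrne, (List.dropLast_append_getLast hrne).symm⟩
      subst hr
      have hFlen : F.length = 2*n - 2 := by simp at hlen; omega
      have hS1 : lvl (true :: (F ++ [b])) (F.length + 1) = 1 + (F.map stepVal).sum := by
        simp [lvl, List.take_succ_cons, List.take_left, stepVal]
      have hS2 : lvl (true :: (F ++ [b])) (F.length + 2) =
          1 + (F.map stepVal).sum + stepVal b := by
        have hl : (true :: (F ++ [b])).length = F.length + 2 := by simp
        unfold lvl
        rw [← hl, List.take_length]
        simp [stepVal]
        ring
      have hend' : lvl (true :: (F ++ [b])) (F.length + 2) = 0 := by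
        have hl : (true :: (F ++ [b])).length = F.length + 2 := by simp
        rw [← hl]; exact hend
      have hnn1 := hnn (F.length + 1) (by simp)
      have hb : b = false := by
        cases b
        · rfl
        · exfalso; rw [hS2] at hend'; rw [hS1] at hnn1
          simp [stepVal] at hend'; omega
      subst hb
      set p := unconv F with hp
      have hF : (p.map conv).flatten = F := conv_unconv F (by omega)
      have hq : motzkinToDyck p = true :: (F ++ [false]) := by
        rw [motzkinToDyck, hF]
      have hplen : 2 * p.length = F.length := by
        rw [← hF, flatten_conv_length]
      refine ⟨p, ⟨⟨?_, ?_⟩, by omega⟩, hq⟩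
      · have h1 := lvl_mToD_full p
        rw [hq] at h1
        omega
      · intro j hj
        have h1 := lvl_mToD p j hj
        rw [hq] at h1
        have h2 := hnn (2*j+1) (by simp; omega)
        omega
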